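/- Let σ > 0, a > 0 and z ∈ ℝ, and let X be a real random variable with the Gaussian distribution N(0, σ²). Then E[ max(0, min(X + zσ, aσ)) ] = σ · [ (φ(z) − φ(a−z)) + z(Φ(a−z) − Φ(−z)) + a(1 − Φ(a−z)) ]. -/

import Mathlib

open MeasureTheory ProbabilityTheory

/-- The standard normal density `φ`. -/
noncomputable def stdNormalPDF (t : ℝ) : ℝ :=
  (Real.sqrt (2 * Real.pi))⁻¹ * Real.exp (-t^2/2)

/-- The standard normal cumulative distribution function `Φ`. -/
noncomputable def stdNormalCDF (x : ℝ) : ℝ :=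
  ∫ t in Set.Iic x, stdNormalPDF t

open Real Set Filter Topology

/-! Write `X = σ T` with `T ~ N(0, 1)` and split the clamp into two positive parts,
`max 0 (min x a) = x⁺ - (x - a)⁺` for `0 ≤ a`. Each part is given by
`E[(T + c)⁺] = φ(c) + c (1 - Φ(-c))`, which follows from `(-φ)' = t φ`. -/

lemma stdNormalPDF_eq_gaussianPDFReal : stdNormalPDF = gaussianPDFReal 0 1 := by
  ext t
  simp [stdNormalPDF, gaussianPDFReal]

lemma integral_gaussianReal_eq_integral_stdNormalPDF_mul (f : ℝ → ℝ) :
    ∫ t, f t ∂(gaussianReal 0 1) = ∫ t, stdNormalPDF t * f t := by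
  rw [integral_gaussianReal_eq_integral_smul one_ne_zero, stdNormalPDF_eq_gaussianPDFReal]
  rfl

lemma integrable_stdNormalPDF : Integrable stdNormalPDF :=
  stdNormalPDF_eq_gaussianPDFReal ▸ integrable_gaussianPDFReal 0 1

lemma integral_stdNormalPDF : ∫ t, stdNormalPDF t = 1 := by
  rw [stdNormalPDF_eq_gaussianPDFReal, integral_gaussianPDFReal_eq_one 0 one_ne_zero]

@[fun_prop]
lemma continuous_stdNormalPDF : Continuous stdNormalPDF := by
  unfold stdNormalPDF
  fun_prop

lemma stdNormalPDF_neg (t : ℝ) : stdNormalPDF (-t) = stdNormalPDF t := by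
  simp [stdNormalPDF]

lemma hasDerivAt_stdNormalPDF (t : ℝ) :
    HasDerivAt stdNormalPDF (-(t * stdNormalPDF t)) t := by
  have h : HasDerivAt (fun s : ℝ => -s ^ 2 / 2) (-t) t := by
    simpa using (((hasDerivAt_pow 2 t).neg).div_const 2).congr_deriv (by ring)
  exact (h.exp.const_mul (√(2 * π))⁻¹).congr_deriv (by rw [stdNormalPDF]; ring)

lemma tendsto_stdNormalPDF_atTop : Tendsto stdNormalPDF atTop (𝓝 0) := by
  have h : Tendsto (fun t : ℝ => -t ^ 2 / 2) atTop atBot :=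
    (tendsto_neg_atTop_atBot.comp (tendsto_pow_atTop two_ne_zero)).atBot_div_const two_pos
  have := (tendsto_exp_atBot.comp h).const_mul (√(2 * π))⁻¹
  rwa [mul_zero] at this

lemma integrable_mul_stdNormalPDF : Integrable fun t => t * stdNormalPDF t := by
  have h := (integrable_mul_exp_neg_mul_sq (b := 1 / 2) (by norm_num)).const_mul (√(2 * π))⁻¹
  refine h.congr (ae_of_all _ fun t => ?_)
  simp only [stdNormalPDF]
  ring_nf

lemma integral_Ioi_mul_stdNormalPDF (x : ℝ) :
    ∫ t in Ioi x, t * stdNormalPDF t = stdNormalPDF x := by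
  have h := integral_Ioi_of_hasDerivAt_of_tendsto' (a := x) (f := fun t => -stdNormalPDF t)
    (fun t _ => (hasDerivAt_stdNormalPDF t).neg.congr_deriv (neg_neg _))
    integrable_mul_stdNormalPDF.integrableOn (by simpa using tendsto_stdNormalPDF_atTop.neg)
  simpa using h

lemma integral_Ioi_stdNormalPDF (x : ℝ) :
    ∫ t in Ioi x, stdNormalPDF t = 1 - stdNormalCDF x := by
  rw [← integral_stdNormalPDF, ← intervalIntegral.integral_Iic_add_Ioi (b := x)
    integrable_stdNormalPDF.integrableOn integrable_stdNormalPDF.integrableOn, stdNormalCDF,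
    add_sub_cancel_left]

lemma integrable_stdNormalPDF_mul_max_add_zero (c : ℝ) :
    Integrable fun t => stdNormalPDF t * max (t + c) 0 := by
  have h : Integrable fun t => stdNormalPDF t * (t + c) :=
    (integrable_mul_stdNormalPDF.add (integrable_stdNormalPDF.const_mul c)).congr
      (ae_of_all _ fun t => by simp only [Pi.add_apply]; ring)
  refine h.mono (by fun_prop) (ae_of_all _ fun t => ?_)
  rw [norm_mul, norm_mul, Real.norm_of_nonneg (le_max_right _ _), Real.norm_eq_abs (t + c)]
  gcongr
  exact max_le (le_abs_self _) (abs_nonneg _)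

lemma integral_stdNormalPDF_mul_max_add_zero (c : ℝ) :
    ∫ t, stdNormalPDF t * max (t + c) 0 = stdNormalPDF c + c * (1 - stdNormalCDF (-c)) := by
  have hvanish : ∀ t ∉ Ioi (-c), stdNormalPDF t * max (t + c) 0 = 0 := fun t ht => by
    rw [max_eq_right (by linarith [notMem_Ioi.mp ht]), mul_zero]
  calc ∫ t, stdNormalPDF t * max (t + c) 0
      = ∫ t in Ioi (-c), stdNormalPDF t * max (t + c) 0 :=
        (setIntegral_eq_integral_of_forall_compl_eq_zero hvanish).symm
    _ = ∫ t in Ioi (-c), (t * stdNormalPDF t + c * stdNormalPDF t) :=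
        setIntegral_congr_fun measurableSet_Ioi fun t ht => by
          rw [max_eq_left (by linarith [mem_Ioi.mp ht])]; ring
    _ = stdNormalPDF c + c * (1 - stdNormalCDF (-c)) := by
      rw [integral_add integrable_mul_stdNormalPDF.integrableOn
        (integrable_stdNormalPDF.const_mul c).integrableOn, integral_const_mul,
        integral_Ioi_mul_stdNormalPDF, integral_Ioi_stdNormalPDF, stdNormalPDF_neg]

lemma max_zero_min_eq_max_sub_max {x a : ℝ} (ha : 0 ≤ a) :
    max 0 (min x a) = max x 0 - max (x - a) 0 := by
  rcases le_total x 0 with hx | hx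
  · rw [max_eq_left (min_le_of_left_le hx), max_eq_right hx, max_eq_right (by linarith)]; ring
  rcases le_total x a with hxa | hxa
  · rw [min_eq_left hxa, max_eq_right hx, max_eq_left hx, max_eq_right (by linarith)]; ring
  · rw [min_eq_right hxa, max_eq_right ha, max_eq_left hx, max_eq_left (by linarith)]; ring

lemma integral_stdNormalPDF_mul_max_zero_min {a : ℝ} (ha : 0 ≤ a) (z : ℝ) :
    ∫ t, stdNormalPDF t * max 0 (min (t + z) a)
      = (stdNormalPDF z - stdNormalPDF (a - z))
        + z * (stdNormalCDF (a - z) - stdNormalCDF (-z))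
        + a * (1 - stdNormalCDF (a - z)) := by
  simp_rw [max_zero_min_eq_max_sub_max ha, add_sub_assoc, mul_sub]
  rw [integral_sub (integrable_stdNormalPDF_mul_max_add_zero z)
      (integrable_stdNormalPDF_mul_max_add_zero (z - a)),
    integral_stdNormalPDF_mul_max_add_zero, integral_stdNormalPDF_mul_max_add_zero, neg_sub, ← stdNormalPDF_neg (z - a), neg_sub]
  ring

lemma gaussianReal_toNNReal_sq_eq_map_const_mul (σ : ℝ) :
    gaussianReal 0 (σ ^ 2).toNNReal = (gaussianReal 0 1).map (σ * ·) := by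
  rw [gaussianReal_map_const_mul, mul_zero, mul_one]
  congr
  ext
  simp [sq_nonneg]

/-- The key expected-length computation in the proof of Theorem 1 of Cai, Low and Xia (2013):
if `X ~ N(0, σ²)`, then
`E[max(0, min(X + zσ, aσ))] = σ[(φ(z) − φ(a−z)) + z(Φ(a−z) − Φ(−z)) + a(1 − Φ(a−z))]`. -/
theorem expected_length_truncated_interval
    {Ω : Type*} [MeasurableSpace Ω] (P : Measure Ω) [IsProbabilityMeasure P]
    (σ a z : ℝ) (hσ : 0 < σ) (ha : 0 < a)
    (X : Ω → ℝ) (hX : P.map X = gaussianReal 0 (Real.toNNReal (σ^2))) :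
    ∫ ω, max 0 (min (X ω + z * σ) (a * σ)) ∂P
      = σ * ((stdNormalPDF z - stdNormalPDF (a - z))
          + z * (stdNormalCDF (a - z) - stdNormalCDF (-z))
          + a * (1 - stdNormalCDF (a - z))) := by
  have hXm : AEMeasurable X P := aemeasurable_of_map_neZero (by rw [hX]; infer_instance)
  have hscale (t : ℝ) : max 0 (min (σ * t + z * σ) (a * σ)) = σ * max 0 (min (t + z) a) := by
    rw [mul_max_of_nonneg _ _ hσ.le, mul_min_of_nonneg _ _ hσ.le, mul_zero, mul_add,
      mul_comm z, mul_comm a]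
  calc ∫ ω, max 0 (min (X ω + z * σ) (a * σ)) ∂P
      = ∫ x, max 0 (min (x + z * σ) (a * σ)) ∂(gaussianReal 0 (σ ^ 2).toNNReal) := by
        rw [← hX, integral_map hXm (by fun_prop)]
    _ = ∫ t, σ * max 0 (min (t + z) a) ∂(gaussianReal 0 1) := by
        rw [gaussianReal_toNNReal_sq_eq_map_const_mul, integral_map (by fun_prop) (by fun_prop)]
        simp only [hscale]
    _ = _ := by
        rw [integral_const_mul, integral_gaussianReal_eq_integral_stdNormalPDF_mul,
          integral_stdNormalPDF_mul_max_zero_min ha.le]
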